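/- Let E ∈ M_r(ℂ) satisfy E² = I (E is similar to a self-adjoint unitary), with polar decomposition E = RL where L = |E| and R unitary. Then R = R* = R⁻¹ is a unitary reflection, RL = L⁻¹R, and for every λ ∈ (0,1) and n ∈ ℕ, the n-th iterated λ-Aluthge transform is Δ_λⁿ(E) = R L^{(1−2λ)ⁿ}; consequently Δ_λⁿ(E) → R as n → ∞. -/

import Mathlib

/-!
Write `L = |E|`. Since `E` is invertible so is `L`, and `(RL)² = 1` with `R` unitary gives
`L R L = R*`; taking adjoints, `R = L² R L²`, i.e. `R L² R* = L⁻²`. Conjugation by a unitary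
commutes with the functional calculus, so `R L^s = L^{-s} R` for every real `s`; with `s = 1`
this gives `R* = L R L = R`. Consequently `|R L^a| = L^a` and
`Δ_λ(R L^a) = L^{λa} R L^{(1-λ)a} = R L^{(1-2λ)a}`, so the exponents of the iterates are
`(1-2λ)ⁿ → 0`, and `s ↦ L^s` is continuous with `L⁰ = 1`.
-/

open Matrix
open scoped ComplexOrder

/-- `|T| = (Tᴴ T)^{1/2}`, the positive semidefinite absolute value of a matrix. -/
noncomputable def matAbs {n : Type*} [Fintype n] [DecidableEq n]
    (T : Matrix n n ℂ) : Matrix n n ℂ :=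
  ((Matrix.posSemidef_conjTranspose_mul_self T).1.eigenvectorUnitary : Matrix n n ℂ) *
    diagonal ((↑) ∘ Real.sqrt ∘ (Matrix.posSemidef_conjTranspose_mul_self T).1.eigenvalues) *
    (star ((Matrix.posSemidef_conjTranspose_mul_self T).1.eigenvectorUnitary : Matrix n n ℂ))

/-- Real power `P^l` of a Hermitian matrix, via the functional calculus
(junk value `0` if `P` is not Hermitian). -/
noncomputable def hermPow {n : Type*} [Fintype n] [DecidableEq n]
    (P : Matrix n n ℂ) (l : ℝ) : Matrix n n ℂ :=
  if h : P.IsHermitian then h.cfc (fun x : ℝ => x ^ l) else 0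

/-- The λ-Aluthge transform `|T|^λ U |T|^{1-λ}`, where `U` is a polar part of `T`. -/
noncomputable def aluthge {n : Type*} [Fintype n] [DecidableEq n]
    (l : ℝ) (U T : Matrix n n ℂ) : Matrix n n ℂ :=
  hermPow (matAbs T) l * U * hermPow (matAbs T) (1 - l)

namespace Matrix

variable {n : Type*} [Fintype n] [DecidableEq n]

lemma continuousOn_spectrum_real (f : ℝ → ℝ) (A : Matrix n n ℂ) :
    ContinuousOn f (spectrum ℝ A) :=
  A.finite_real_spectrum.continuousOn f

lemma PosSemidef.nonneg_of_mem_spectrum {A : Matrix n n ℂ} (hA : A.PosSemidef) {x : ℝ}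
    (hx : x ∈ spectrum ℝ A) : 0 ≤ x := by
  obtain ⟨i, rfl⟩ := hA.1.spectrum_real_eq_range_eigenvalues ▸ hx
  exact hA.eigenvalues_nonneg i

lemma PosDef.pos_of_mem_spectrum {A : Matrix n n ℂ} (hA : A.PosDef) {x : ℝ}
    (hx : x ∈ spectrum ℝ A) : 0 < x := by
  obtain ⟨i, rfl⟩ := hA.1.spectrum_real_eq_range_eigenvalues ▸ hx
  exact hA.eigenvalues_pos i

section hermPow

variable {A : Matrix n n ℂ}

lemma hermPow_eq_cfc (hA : A.IsHermitian) (s : ℝ) :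
    hermPow A s = cfc (· ^ s : ℝ → ℝ) A := by
  rw [hermPow, dif_pos hA, hA.cfc_eq]

lemma isHermitian_hermPow (A : Matrix n n ℂ) (s : ℝ) : (hermPow A s).IsHermitian := by
  by_cases hA : A.IsHermitian
  · rw [hermPow_eq_cfc hA]
    exact cfc_predicate _ A
  · rw [hermPow, dif_neg hA]
    exact isHermitian_zero

lemma hermPow_zero (hA : A.IsHermitian) : hermPow A 0 = 1 := by
  simp only [hermPow_eq_cfc hA, Real.rpow_zero]
  exact cfc_const_one ℝ A

lemma hermPow_one (hA : A.IsHermitian) : hermPow A 1 = A := by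
  simp only [hermPow_eq_cfc hA, Real.rpow_one]
  exact cfc_id' ℝ A

lemma hermPow_add (hA : A.PosDef) (s t : ℝ) :
    hermPow A (s + t) = hermPow A s * hermPow A t := by
  rw [hermPow_eq_cfc hA.1, hermPow_eq_cfc hA.1, hermPow_eq_cfc hA.1,
    ← cfc_mul _ _ A (continuousOn_spectrum_real _ A) (continuousOn_spectrum_real _ A)]
  exact cfc_congr fun x hx => Real.rpow_add (hA.pos_of_mem_spectrum hx) s t

lemma hermPow_hermPow (hA : A.PosDef) (s t : ℝ) :
    hermPow (hermPow A s) t = hermPow A (s * t) := by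
  rw [hermPow_eq_cfc (isHermitian_hermPow A s), hermPow_eq_cfc hA.1, hermPow_eq_cfc hA.1]
  refine (cfc_comp' (· ^ t) (· ^ s) A ((A.finite_real_spectrum.image _).continuousOn _)
      (continuousOn_spectrum_real _ A) hA.1).symm.trans ?_
  exact cfc_congr fun x hx => (Real.rpow_mul (hA.pos_of_mem_spectrum hx).le s t).symm

lemma hermPow_neg_one (hA : A.PosDef) : hermPow A (-1) = A⁻¹ := by
  refine (inv_eq_left_inv ?_).symm
  calc hermPow A (-1) * A = hermPow A (-1) * hermPow A 1 := by rw [hermPow_one hA.1]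
    _ = 1 := by rw [← hermPow_add hA, neg_add_cancel, hermPow_zero hA.1]

open scoped MatrixOrder in
lemma posSemidef_hermPow (hA : A.PosSemidef) (s : ℝ) : (hermPow A s).PosSemidef := by
  rw [hermPow_eq_cfc hA.1]
  exact (cfc_nonneg fun x hx => Real.rpow_nonneg (hA.nonneg_of_mem_spectrum hx) s).posSemidef

lemma continuous_hermPow (hA : A.PosDef) : Continuous (hermPow A) := by
  have hrepr : hermPow A = fun s : ℝ => (hA.1.eigenvectorUnitary : Matrix n n ℂ) *
      diagonal (fun i => ((hA.1.eigenvalues i ^ s : ℝ) : ℂ)) *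
      star (hA.1.eigenvectorUnitary : Matrix n n ℂ) := by
    funext s
    rw [hermPow, dif_pos hA.1, IsHermitian.cfc, Unitary.conjStarAlgAut_apply]
    rfl
  rw [hrepr]
  refine (continuous_const.matrix_mul (Continuous.matrix_diagonal ?_)).matrix_mul continuous_const
  exact continuous_pi fun i =>
    Complex.continuous_ofReal.comp (Real.continuous_const_rpow (hA.eigenvalues_pos i).ne')

lemma unitary_mul_hermPow_mul_conjTranspose {R : Matrix n n ℂ} (hR : R ∈ unitaryGroup n ℂ)
    (hA : A.IsHermitian) (s : ℝ) : R * hermPow A s * Rᴴ = hermPow (R * A * Rᴴ) s := by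
  have hRA : (R * A * Rᴴ).IsHermitian := by
    simpa using isHermitian_conjTranspose_mul_mul Rᴴ hA
  rw [hermPow_eq_cfc hA, hermPow_eq_cfc hRA]
  exact StarAlgHomClass.map_cfc (Unitary.conjStarAlgAut ℂ _ ⟨R, hR⟩) _ A
    (continuousOn_spectrum_real _ A)
    ((continuous_const.matrix_mul continuous_id).matrix_mul continuous_const) hA hRA

end hermPow

section matAbs

lemma matAbs_eq_cfc (T : Matrix n n ℂ) : matAbs T = cfc Real.sqrt (Tᴴ * T) := by
  rw [(posSemidef_conjTranspose_mul_self T).1.cfc_eq]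
  rfl

open scoped MatrixOrder in
lemma posSemidef_matAbs (T : Matrix n n ℂ) : (matAbs T).PosSemidef := by
  rw [matAbs_eq_cfc]
  exact (cfc_nonneg fun x _ => Real.sqrt_nonneg x).posSemidef

lemma matAbs_mul_self (T : Matrix n n ℂ) : matAbs T * matAbs T = Tᴴ * T := by
  have hT := posSemidef_conjTranspose_mul_self T
  rw [matAbs_eq_cfc, ← cfc_mul _ _ _ (continuousOn_spectrum_real _ _)
    (continuousOn_spectrum_real _ _)]
  refine (cfc_congr fun x hx => ?_).trans (cfc_id' ℝ _ hT.1)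
  exact Real.mul_self_sqrt (hT.nonneg_of_mem_spectrum hx)

lemma matAbs_eq_of_sq_eq {T P : Matrix n n ℂ} (hP : P.PosSemidef) (h : P ^ 2 = Tᴴ * T) :
    matAbs T = P := by
  rw [matAbs_eq_cfc, ← h]
  refine (cfc_comp_pow Real.sqrt 2 P ((P.finite_real_spectrum.image _).continuousOn _)
    hP.1).symm.trans ((cfc_congr fun x hx => ?_).trans (cfc_id' ℝ P hP.1))
  exact Real.sqrt_sq (hP.nonneg_of_mem_spectrum hx)

lemma matAbs_unitary_mul {R P : Matrix n n ℂ} (hR : R ∈ unitaryGroup n ℂ)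
    (hP : P.PosSemidef) : matAbs (R * P) = P := by
  refine matAbs_eq_of_sq_eq hP ?_
  have hRR : Rᴴ * R = 1 := Unitary.star_mul_self_of_mem hR
  rw [conjTranspose_mul, hP.1.eq, mul_assoc, ← mul_assoc Rᴴ, hRR, one_mul, sq]

lemma posDef_matAbs {T : Matrix n n ℂ} (hT : IsUnit T) : (matAbs T).PosDef := by
  refine (posSemidef_matAbs T).posDef_iff_isUnit.mpr ?_
  have h : IsUnit (matAbs T * matAbs T) := matAbs_mul_self T ▸ hT.star.mul hT
  rw [isUnit_iff_isUnit_det, det_mul, IsUnit.mul_iff] at h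
  exact (isUnit_iff_isUnit_det _).mpr h.1

end matAbs

section reflection

variable {R L : Matrix n n ℂ}

lemma mul_mul_eq_conjTranspose (hR : R ∈ unitaryGroup n ℂ) (h : R * L * (R * L) = 1) :
    L * R * L = Rᴴ := by
  have hRR : Rᴴ * R = 1 := Unitary.star_mul_self_of_mem hR
  calc L * R * L = Rᴴ * R * (L * R * L) := by rw [hRR, one_mul]
    _ = Rᴴ * (R * L * (R * L)) := by simp only [mul_assoc]
    _ = Rᴴ := by rw [h, mul_one]

lemma mul_hermPow_eq_hermPow_neg_mul (hR : R ∈ unitaryGroup n ℂ) (hL : L.PosDef)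
    (h : R * L * (R * L) = 1) (s : ℝ) : R * hermPow L s = hermPow L (-s) * R := by
  have hRR : Rᴴ * R = 1 := Unitary.star_mul_self_of_mem hR
  have hRR' : R * Rᴴ = 1 := Unitary.mul_star_self_of_mem hR
  have hLRL : L * R * L = Rᴴ := mul_mul_eq_conjTranspose hR h
  have hsq : hermPow L 2 = L * L := by
    rw [← one_add_one_eq_two, hermPow_add hL, hermPow_one hL.1]
  have hR_eq : R = hermPow L 2 * R * hermPow L 2 := by
    calc R = (L * R * L)ᴴ := by rw [hLRL, conjTranspose_conjTranspose]
      _ = L * Rᴴ * L := by rw [conjTranspose_mul, conjTranspose_mul, hL.1.eq, mul_assoc]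
      _ = hermPow L 2 * R * hermPow L 2 := by rw [← hLRL, hsq]; simp only [mul_assoc]
  have hconj_sq : R * hermPow L 2 * Rᴴ = hermPow L (-2) := by
    calc R * hermPow L 2 * Rᴴ = hermPow L (-2) * (hermPow L 2 * R * hermPow L 2) * Rᴴ := by
          rw [← mul_assoc, ← mul_assoc, ← hermPow_add hL, neg_add_cancel, hermPow_zero hL.1,
            one_mul]
      _ = hermPow L (-2) := by rw [← hR_eq, mul_assoc, hRR', mul_one]
  calc R * hermPow L s = R * hermPow L s * Rᴴ * R := by rw [mul_assoc _ Rᴴ, hRR, mul_one]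
    _ = hermPow (R * hermPow L 2 * Rᴴ) (s / 2) * R := by
      rw [← unitary_mul_hermPow_mul_conjTranspose hR (isHermitian_hermPow L 2),
        hermPow_hermPow hL, mul_div_cancel₀ s two_ne_zero]
    _ = hermPow L (-s) * R := by
      rw [hconj_sq, hermPow_hermPow hL, neg_mul, mul_div_cancel₀ s two_ne_zero]

lemma mul_eq_inv_mul (hR : R ∈ unitaryGroup n ℂ) (hL : L.PosDef) (h : R * L * (R * L) = 1) :
    R * L = L⁻¹ * R := by
  simpa [hermPow_one hL.1, hermPow_neg_one hL] using mul_hermPow_eq_hermPow_neg_mul hR hL h 1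

lemma conjTranspose_eq_self_of_mul_mul_eq_one (hR : R ∈ unitaryGroup n ℂ) (hL : L.PosDef)
    (h : R * L * (R * L) = 1) : Rᴴ = R := by
  calc Rᴴ = L * (R * L) := by rw [← mul_mul_eq_conjTranspose hR h, mul_assoc]
    _ = R := by
      rw [mul_eq_inv_mul hR hL h]
      exact mul_nonsing_inv_cancel_left L R ((isUnit_iff_isUnit_det L).mp hL.isUnit)

lemma aluthge_unitary_mul_hermPow (hR : R ∈ unitaryGroup n ℂ) (hL : L.PosDef)
    (hcomm : ∀ s, R * hermPow L s = hermPow L (-s) * R) (l a : ℝ) :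
    aluthge l R (R * hermPow L a) = R * hermPow L (a * (1 - 2 * l)) := by
  have hswap : hermPow L (a * l) * R = R * hermPow L (-(a * l)) := by rw [hcomm, neg_neg]
  rw [aluthge, matAbs_unitary_mul hR (posSemidef_hermPow hL.posSemidef a), hermPow_hermPow hL,
    hermPow_hermPow hL, hswap, mul_assoc, ← hermPow_add hL]
  ring_nf

lemma tendsto_mul_hermPow_pow (R : Matrix n n ℂ) (hL : L.PosDef) {c : ℝ} (hc : |c| < 1) :
    Filter.Tendsto (fun k : ℕ => R * hermPow L (c ^ k)) Filter.atTop (nhds R) := by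
  have h := (continuous_hermPow hL).tendsto 0 |>.comp
    (tendsto_pow_atTop_nhds_zero_of_abs_lt_one hc)
  rw [hermPow_zero hL.1] at h
  simpa using h.const_mul R

end reflection

end Matrix

/-- if `E² = I` with polar decomposition `E = R L` (`L = |E|`, `R` unitary),
then `R` is a unitary reflection, `R L = L⁻¹ R`, the iterated λ-Aluthge transforms are
`Δ_λⁿ(E) = R L^{(1−2λ)ⁿ}`, and `Δ_λⁿ(E) → R`. -/
theorem aluthge_iterates_of_reflection {r : ℕ} (l : ℝ) (hl : l ∈ Set.Ioo (0 : ℝ) 1)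
    (E R : Matrix (Fin r) (Fin r) ℂ) (hE2 : E * E = 1)
    (hR : R ∈ Matrix.unitaryGroup (Fin r) ℂ) (hpolar : E = R * matAbs E) :
    Rᴴ = R ∧ R * R = 1 ∧ R * matAbs E = (matAbs E)⁻¹ * R ∧
    R * hermPow (matAbs E) ((1 - 2 * l) ^ (0 : ℕ)) = E ∧
    (∀ n : ℕ,
      matAbs (R * hermPow (matAbs E) ((1 - 2 * l) ^ n))
          = hermPow (matAbs E) ((1 - 2 * l) ^ n) ∧
      aluthge l R (R * hermPow (matAbs E) ((1 - 2 * l) ^ n))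
          = R * hermPow (matAbs E) ((1 - 2 * l) ^ (n + 1))) ∧
    Filter.Tendsto (fun n : ℕ => R * hermPow (matAbs E) ((1 - 2 * l) ^ n))
      Filter.atTop (nhds R) := by
  set L := matAbs E
  have hL : L.PosDef := posDef_matAbs (IsUnit.of_mul_eq_one E hE2)
  have hRL : R * L * (R * L) = 1 := by rw [← hpolar]; exact hE2
  have hRh : Rᴴ = R := conjTranspose_eq_self_of_mul_mul_eq_one hR hL hRL
  have hc : |1 - 2 * l| < 1 := by
    rw [abs_lt]
    constructor <;> linarith [hl.1, hl.2]
  refine ⟨hRh, ?_, mul_eq_inv_mul hR hL hRL, by rw [pow_zero, hermPow_one hL.1, ← hpolar],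
    fun k => ⟨matAbs_unitary_mul hR (posSemidef_hermPow hL.posSemidef _), ?_⟩,
    tendsto_mul_hermPow_pow R hL hc⟩
  · have hRR : Rᴴ * R = 1 := Unitary.star_mul_self_of_mem hR
    rwa [hRh] at hRR
  · rw [aluthge_unitary_mul_hermPow hR hL (mul_hermPow_eq_hermPow_neg_mul hR hL hRL), pow_succ]
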